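/- Let (ζ_k) be i.i.d. real random variables with distribution H, let N ~ Poisson(C₂) with 0 < C₂ < ∞ be independent of (ζ_k), and let ζ = (ζ_1, …, ζ_N). For any m > 0 and any 1 ≤ p ≤ ∞: E|ζ_1|^m < ∞ if and only if E ||ζ||_p^m < ∞, where ||ζ||_p is the p-norm of the random-length vector (equal to 0 when N = 0). -/

import Mathlib

/-!
On `{N = n}` every coordinate satisfies `|ζ_k| ≤ ‖ζ‖_p ≤ n · max_{k<n} |ζ_k|`, so
`‖ζ‖_p^m ≤ N^m ∑_{k<N} |ζ_k|^m`. As `N` is independent of each `ζ_k`, the right-hand side has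
expectation `E[N^{m+1}] · E|ζ_1|^m`, finite because a Poisson variable has moments of all orders.
Conversely `‖ζ‖_p^m ≥ 1_{N ≥ 1} |ζ_1|^m`, whose expectation is `P(N ≥ 1) · E|ζ_1|^m` with
`P(N ≥ 1) > 0`. Indices start at `0`, so `ζ_1` is `ζ 0`.
-/

open MeasureTheory ProbabilityTheory
open scoped ENNReal

/-- The `p`-norm of the random-length vector `(x 0, …, x (n-1))`:
`(∑_{k<n} |x k|^p)^(1/p)` for `p < ∞` and `max_{k<n} |x k|` for `p = ∞`
(equal to `0` when `n = 0`). -/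
noncomputable def rnorm (p : ℝ≥0∞) (n : ℕ) (x : ℕ → ℝ) : ℝ :=
  if p = ⊤ then sSup ((fun k => |x k|) '' Set.Iio n)
  else (∑ k ∈ Finset.range n, |x k| ^ p.toReal) ^ (1 / p.toReal)

open scoped NNReal Nat

section rnorm

variable {p : ℝ≥0∞} {n : ℕ} {x : ℕ → ℝ}

lemma rnorm_nonneg (p : ℝ≥0∞) (n : ℕ) (x : ℕ → ℝ) : 0 ≤ rnorm p n x := by
  unfold rnorm
  split_ifs
  · exact Real.sSup_nonneg (by rintro _ ⟨k, -, rfl⟩; exact abs_nonneg _)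
  · positivity

lemma rnorm_zero (hp : p ≠ 0) (x : ℕ → ℝ) : rnorm p 0 x = 0 := by
  unfold rnorm
  split_ifs with htop
  · simp
  · simp [ENNReal.toReal_eq_zero_iff, hp, htop]

lemma abs_le_rnorm (hp : p ≠ 0) {k : ℕ} (hk : k < n) (x : ℕ → ℝ) : |x k| ≤ rnorm p n x := by
  unfold rnorm
  split_ifs with htop
  · exact le_csSup ((Set.finite_Iio n).image _).bddAbove ⟨k, hk, rfl⟩
  · have hq : 0 < p.toReal := ENNReal.toReal_pos hp htop
    rw [one_div, Real.le_rpow_inv_iff_of_pos (abs_nonneg _) (by positivity) hq]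
    exact Finset.single_le_sum (f := fun j => |x j| ^ p.toReal) (fun j _ => by positivity)
      (Finset.mem_range.2 hk)

lemma rnorm_le_natCast_mul (hp : 1 ≤ p) {B : ℝ} (hB : ∀ k < n, |x k| ≤ B) :
    rnorm p n x ≤ n * B := by
  obtain rfl | hn := Nat.eq_zero_or_pos n
  · simp [rnorm_zero (one_pos.trans_le hp).ne']
  have hB0 : 0 ≤ B := (abs_nonneg _).trans (hB 0 hn)
  have hn1 : (1 : ℝ) ≤ n := by exact_mod_cast hn
  unfold rnorm
  split_ifs with htop
  · refine Real.sSup_le ?_ (by positivity)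
    rintro _ ⟨k, hk, rfl⟩
    exact (hB k hk).trans (le_mul_of_one_le_left hB0 hn1)
  · have hq : 1 ≤ p.toReal := by
      simpa using (ENNReal.toReal_le_toReal ENNReal.one_ne_top htop).2 hp
    rw [one_div, Real.rpow_inv_le_iff_of_pos (by positivity) (by positivity) (by positivity)]
    calc ∑ k ∈ Finset.range n, |x k| ^ p.toReal
        ≤ ∑ _k ∈ Finset.range n, B ^ p.toReal :=
          Finset.sum_le_sum fun k hk =>
            Real.rpow_le_rpow (abs_nonneg _) (hB k (Finset.mem_range.1 hk)) (by positivity)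
      _ = n * B ^ p.toReal := by simp
      _ ≤ n ^ p.toReal * B ^ p.toReal := by gcongr; exact Real.self_le_rpow_of_one_le hn1 hq
      _ = (n * B) ^ p.toReal := (Real.mul_rpow (by positivity) hB0).symm

lemma rnorm_rpow_le (hp : 1 ≤ p) {m : ℝ} (hm : 0 < m) (n : ℕ) (x : ℕ → ℝ) :
    rnorm p n x ^ m ≤ (n : ℝ) ^ m * ∑ k ∈ Finset.range n, |x k| ^ m := by
  obtain rfl | hn := Nat.eq_zero_or_pos n
  · simp [rnorm_zero (one_pos.trans_le hp).ne', Real.zero_rpow hm.ne']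
  obtain ⟨j, hj, hmax⟩ := Finset.exists_max_image (Finset.range n) (fun k => |x k|)
    (Finset.nonempty_range_iff.2 hn.ne')
  calc rnorm p n x ^ m ≤ (n * |x j|) ^ m :=
        Real.rpow_le_rpow (rnorm_nonneg ..)
          (rnorm_le_natCast_mul hp fun k hk => hmax k (Finset.mem_range.2 hk)) hm.le
    _ = (n : ℝ) ^ m * |x j| ^ m := Real.mul_rpow (by positivity) (abs_nonneg _)
    _ ≤ (n : ℝ) ^ m * ∑ k ∈ Finset.range n, |x k| ^ m := by
      gcongr
      exact Finset.single_le_sum (f := fun k => |x k| ^ m) (fun k _ => by positivity) hj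

lemma measurable_rnorm {Ω : Type*} [MeasurableSpace Ω] {ζ : ℕ → Ω → ℝ}
    (hζ : ∀ k, Measurable (ζ k)) {N : Ω → ℕ} (hN : Measurable N) (p : ℝ≥0∞) :
    Measurable fun ω => rnorm p (N ω) fun k => ζ k ω := by
  have hfixed (n : ℕ) : Measurable fun ω => rnorm p n fun k => ζ k ω := by
    unfold rnorm
    split_ifs
    · simp_rw [sSup_image']
      exact Measurable.iSup fun k => (hζ k).abs
    · fun_prop
  have hpair : Measurable fun q : Ω × ℕ => rnorm p q.2 fun k => ζ k q.1 :=
    measurable_from_prod_countable_left hfixed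
  exact hpair.comp (f := fun ω => (ω, N ω)) (measurable_id.prodMk hN)

end rnorm

lemma ProbabilityTheory.IndepFun.lintegral_comp_mul {Ω β : Type*} [MeasurableSpace Ω]
    [MeasurableSpace β] {μ : Measure Ω} {Y : Ω → β} {X : Ω → ℝ≥0∞} (h : IndepFun Y X μ)
    (hY : Measurable Y) (hX : Measurable X) {g : β → ℝ≥0∞} (hg : Measurable g) :
    ∫⁻ ω, g (Y ω) * X ω ∂μ = (∫⁻ ω, g (Y ω) ∂μ) * ∫⁻ ω, X ω ∂μ :=
  lintegral_mul_eq_lintegral_mul_lintegral_of_indepFun (hg.comp hY) hX (h.comp hg measurable_id)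

lemma mul_sum_range_eq_tsum {α : Type*} [NonUnitalNonAssocSemiring α] [TopologicalSpace α]
    (f : ℕ → α) (x : ℕ → α) (n : ℕ) :
    f n * ∑ k ∈ Finset.range n, x k = ∑' k, (if k < n then f n else 0) * x k := by
  rw [tsum_eq_sum (s := Finset.range n) fun k hk => by simp_all, Finset.mul_sum]
  exact Finset.sum_congr rfl fun k hk => by rw [if_pos (Finset.mem_range.1 hk)]

lemma tsum_ite_lt {α : Type*} [CommSemiring α] [TopologicalSpace α] (c : α) (n : ℕ) :
    ∑' k : ℕ, (if k < n then c else 0) = c * n := by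
  rw [tsum_eq_sum (s := Finset.range n) fun k hk => by simp_all,
    Finset.sum_congr rfl fun k hk => if_pos (Finset.mem_range.1 hk)]
  simp [mul_comm]

/-- Wald-type identity for a length `N` independent of each summand: expand the random sum as
`∑' k, 1{k < N} X_k` and integrate term by term. -/
theorem lintegral_mul_sum_range_of_indepFun {Ω : Type*} [MeasurableSpace Ω] {μ : Measure Ω}
    {N : Ω → ℕ} {X : ℕ → Ω → ℝ≥0∞} {a : ℝ≥0∞} (hN : Measurable N)
    (hX : ∀ k, Measurable (X k)) (hind : ∀ k, IndepFun N (X k) μ)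
    (ha : ∀ k, ∫⁻ ω, X k ω ∂μ = a) (f : ℕ → ℝ≥0∞) :
    ∫⁻ ω, f (N ω) * ∑ k ∈ Finset.range (N ω), X k ω ∂μ = (∫⁻ ω, f (N ω) * N ω ∂μ) * a := by
  let g (k n : ℕ) : ℝ≥0∞ := if k < n then f n else 0
  have hg (k : ℕ) : Measurable fun ω => g k (N ω) :=
    (Measurable.of_discrete (f := g k)).comp hN
  calc ∫⁻ ω, f (N ω) * ∑ k ∈ Finset.range (N ω), X k ω ∂μ
      = ∫⁻ ω, ∑' k, g k (N ω) * X k ω ∂μ := by simp_rw [mul_sum_range_eq_tsum]; rfl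
    _ = ∑' k, (∫⁻ ω, g k (N ω) ∂μ) * a := by
      rw [lintegral_tsum (f := fun k ω => g k (N ω) * X k ω) fun k =>
        ((hg k).mul (hX k)).aemeasurable]
      simp_rw [(hind _).lintegral_comp_mul hN (hX _) .of_discrete, ha]
    _ = (∫⁻ ω, f (N ω) * N ω ∂μ) * a := by
      rw [ENNReal.tsum_mul_right, ← lintegral_tsum fun k => (hg k).aemeasurable]
      simp_rw [g, tsum_ite_lt]

section RandomLengthVector

variable {Ω : Type*} [MeasurableSpace Ω] {μ : Measure Ω} {ζ : ℕ → Ω → ℝ} {N : Ω → ℕ}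
  {p : ℝ≥0∞} {m : ℝ}

lemma lintegral_rnorm_rpow_le (hp : 1 ≤ p) (hm : 0 < m) (hζ : ∀ k, Measurable (ζ k))
    (hN : Measurable N) (hid : ∀ k, μ.map (ζ k) = μ.map (ζ 0))
    (hind : ∀ k, IndepFun N (ζ k) μ) :
    ∫⁻ ω, ENNReal.ofReal (rnorm p (N ω) (fun k => ζ k ω) ^ m) ∂μ ≤
      (∫⁻ ω, ENNReal.ofReal ((N ω : ℝ) ^ (m + 1)) ∂μ) *
        ∫⁻ ω, ENNReal.ofReal (|ζ 0 ω| ^ m) ∂μ := by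
  have hg : Measurable fun x : ℝ => ENNReal.ofReal (|x| ^ m) := by fun_prop
  have hlaw (k : ℕ) : ∫⁻ ω, ENNReal.ofReal (|ζ k ω| ^ m) ∂μ =
      ∫⁻ ω, ENNReal.ofReal (|ζ 0 ω| ^ m) ∂μ := by
    rw [← lintegral_map hg (hζ k), hid k, lintegral_map hg (hζ 0)]
  calc ∫⁻ ω, ENNReal.ofReal (rnorm p (N ω) (fun k => ζ k ω) ^ m) ∂μ
      ≤ ∫⁻ ω, ENNReal.ofReal ((N ω : ℝ) ^ m) *
          ∑ k ∈ Finset.range (N ω), ENNReal.ofReal (|ζ k ω| ^ m) ∂μ := by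
        refine lintegral_mono fun ω => ?_
        rw [← ENNReal.ofReal_sum_of_nonneg fun _ _ => by positivity,
          ← ENNReal.ofReal_mul (by positivity)]
        exact ENNReal.ofReal_le_ofReal (rnorm_rpow_le hp hm _ _)
    _ = (∫⁻ ω, ENNReal.ofReal ((N ω : ℝ) ^ m) * N ω ∂μ) *
          ∫⁻ ω, ENNReal.ofReal (|ζ 0 ω| ^ m) ∂μ :=
        lintegral_mul_sum_range_of_indepFun (X := fun k ω => ENNReal.ofReal (|ζ k ω| ^ m)) hN
          (fun k => hg.comp (hζ k))
          (fun k => (hind k).comp measurable_id hg) hlaw fun n => ENNReal.ofReal ((n : ℝ) ^ m)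
    _ = (∫⁻ ω, ENNReal.ofReal ((N ω : ℝ) ^ (m + 1)) ∂μ) *
          ∫⁻ ω, ENNReal.ofReal (|ζ 0 ω| ^ m) ∂μ := by
        congr 1
        refine lintegral_congr fun ω => ?_
        rw [Real.rpow_add_one' (Nat.cast_nonneg _) (by positivity),
          ENNReal.ofReal_mul (by positivity), ENNReal.ofReal_natCast]

lemma measure_ne_zero_mul_lintegral_le_lintegral_rnorm_rpow (hp : p ≠ 0) (hm : 0 ≤ m)
    (hζ₀ : Measurable (ζ 0)) (hN : Measurable N) (hind : IndepFun N (ζ 0) μ) :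
    μ {ω | N ω ≠ 0} * ∫⁻ ω, ENNReal.ofReal (|ζ 0 ω| ^ m) ∂μ ≤
      ∫⁻ ω, ENNReal.ofReal (rnorm p (N ω) (fun k => ζ k ω) ^ m) ∂μ := by
  have hg : Measurable fun x : ℝ => ENNReal.ofReal (|x| ^ m) := by fun_prop
  have hpos : MeasurableSet {n : ℕ | n ≠ 0} := .of_discrete
  calc μ {ω | N ω ≠ 0} * ∫⁻ ω, ENNReal.ofReal (|ζ 0 ω| ^ m) ∂μ
      = (∫⁻ ω, {n : ℕ | n ≠ 0}.indicator 1 (N ω) ∂μ) *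
          ∫⁻ ω, ENNReal.ofReal (|ζ 0 ω| ^ m) ∂μ := by
        congr 1
        exact (lintegral_indicator_one (hN hpos)).symm
    _ = ∫⁻ ω, {n : ℕ | n ≠ 0}.indicator 1 (N ω) * ENNReal.ofReal (|ζ 0 ω| ^ m) ∂μ :=
        ((hind.comp measurable_id hg).lintegral_comp_mul hN (hg.comp hζ₀) .of_discrete).symm
    _ ≤ ∫⁻ ω, ENNReal.ofReal (rnorm p (N ω) (fun k => ζ k ω) ^ m) ∂μ := by
        refine lintegral_mono fun ω => ?_
        by_cases hω : N ω = 0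
        · simp [hω]
        · simp only [Set.indicator_of_mem (show N ω ∈ {n : ℕ | n ≠ 0} from hω), Pi.one_apply,
            one_mul]
          exact ENNReal.ofReal_le_ofReal <| Real.rpow_le_rpow (abs_nonneg _)
            (abs_le_rnorm hp (Nat.pos_of_ne_zero hω) fun k => ζ k ω) hm

theorem integrable_abs_rpow_iff_integrable_rnorm_rpow (hp : 1 ≤ p) (hm : 0 < m)
    (hζ : ∀ k, Measurable (ζ k)) (hN : Measurable N) (hid : ∀ k, μ.map (ζ k) = μ.map (ζ 0))
    (hind : ∀ k, IndepFun N (ζ k) μ) (hmom : Integrable (fun ω => (N ω : ℝ) ^ (m + 1)) μ)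
    (hN₀ : μ {ω | N ω ≠ 0} ≠ 0) :
    Integrable (fun ω => |ζ 0 ω| ^ m) μ ↔
      Integrable (fun ω => rnorm p (N ω) (fun k => ζ k ω) ^ m) μ := by
  rw [← lintegral_ofReal_ne_top_iff_integrable ((hζ 0).abs.pow_const m).aestronglyMeasurable
      (.of_forall fun _ => by positivity),
    ← lintegral_ofReal_ne_top_iff_integrable
      ((measurable_rnorm hζ hN p).pow_const m).aestronglyMeasurable
      (.of_forall fun _ => Real.rpow_nonneg (rnorm_nonneg ..) _)]
  constructor
  · intro hA
    exact ne_top_of_le_ne_top (ENNReal.mul_ne_top hmom.lintegral_lt_top.ne hA)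
      (lintegral_rnorm_rpow_le hp hm hζ hN hid hind)
  · intro hR hA
    have hle := measure_ne_zero_mul_lintegral_le_lintegral_rnorm_rpow
      (one_pos.trans_le hp).ne' hm.le (hζ 0) hN (hind 0)
    rw [hA, ENNReal.mul_top hN₀] at hle
    exact hR (top_le_iff.1 hle)

end RandomLengthVector

lemma Real.rpow_le_factorial_ceil_mul_exp {x s : ℝ} (hx : 0 ≤ x) (hs : 0 ≤ s) :
    x ^ s ≤ (⌈s⌉₊ ! : ℝ) * Real.exp x := by
  have hfact : (1 : ℝ) ≤ ⌈s⌉₊ ! := Nat.one_le_cast.2 (Nat.factorial_pos _)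
  rcases le_total x 1 with hx1 | hx1
  · calc x ^ s ≤ 1 := Real.rpow_le_one hx hx1 hs
      _ ≤ Real.exp x := Real.one_le_exp hx
      _ ≤ (⌈s⌉₊ ! : ℝ) * Real.exp x := le_mul_of_one_le_left (Real.exp_pos x).le hfact
  · calc x ^ s ≤ x ^ (⌈s⌉₊ : ℝ) := Real.rpow_le_rpow_of_exponent_le hx1 (Nat.le_ceil s)
      _ = x ^ ⌈s⌉₊ := Real.rpow_natCast x _
      _ ≤ (⌈s⌉₊ ! : ℝ) * Real.exp x := by
        rw [← div_le_iff₀' (by positivity)]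
        exact Real.pow_div_factorial_le_exp _ hx _

lemma integrable_rpow_poissonMeasure (r : ℝ≥0) {s : ℝ} (hs : 0 ≤ s) :
    Integrable (fun n : ℕ => (n : ℝ) ^ s) Po(r) := by
  rw [integrable_poissonMeasure_iff]
  refine Summable.of_nonneg_of_le (fun n => by positivity) (fun n => ?_)
    ((Real.summable_pow_div_factorial (r * Real.exp 1)).mul_left (Real.exp (-r) * ⌈s⌉₊ !))
  rw [Real.norm_of_nonneg (by positivity)]
  calc Real.exp (-r) * r ^ n / n ! * (n : ℝ) ^ s
      ≤ Real.exp (-r) * r ^ n / n ! * ((⌈s⌉₊ ! : ℝ) * Real.exp n) := by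
        gcongr
        exact Real.rpow_le_factorial_ceil_mul_exp (Nat.cast_nonneg n) hs
    _ = Real.exp (-r) * ⌈s⌉₊ ! * ((r * Real.exp 1) ^ n / n !) := by
        rw [mul_pow, Real.exp_one_pow]
        ring

theorem stmt11_general {Ω : Type*} [MeasurableSpace Ω] (μ : Measure Ω)
    (ζ : ℕ → Ω → ℝ) (N : Ω → ℕ) (C₂ : ℝ) (hC : 0 < C₂)
    (m : ℝ) (hm : 0 < m) (p : ℝ≥0∞) (hp : 1 ≤ p)
    (hmeas : ∀ k, Measurable (ζ k)) (hmN : Measurable N)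
    (hid : ∀ k, Measure.map (ζ k) μ = Measure.map (ζ 0) μ)
    (hpois : ∀ k, μ {ω | N ω = k} =
      ENNReal.ofReal (Real.exp (-C₂) * C₂ ^ k / k.factorial))
    (hindep : iIndepFun
      (fun i : Option ℕ => Option.elim i (fun ω => (N ω : ℝ)) ζ) μ) :
    Integrable (fun ω => |ζ 0 ω| ^ m) μ ↔
      Integrable (fun ω => (rnorm p (N ω) (fun k => ζ k ω)) ^ m) μ := by
  have hlaw : μ.map N = Po(C₂.toNNReal) := by
    refine Measure.ext_of_singleton fun k => ?_
    rw [Measure.map_apply hmN (measurableSet_singleton k), poissonMeasure_singleton,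
      Real.coe_toNNReal _ hC.le]
    exact hpois k
  have hind (k : ℕ) : IndepFun N (ζ k) μ := by
    -- the family carries `N` through its real cast, and `N = ⌊(N : ℝ)⌋₊`
    have h := (hindep.indepFun (show (none : Option ℕ) ≠ some k by simp)).comp
      Nat.measurable_floor measurable_id
    simpa [Function.comp_def] using h
  have hmom : Integrable (fun ω => (N ω : ℝ) ^ (m + 1)) μ := by
    have h := integrable_rpow_poissonMeasure C₂.toNNReal (by positivity : 0 ≤ m + 1)
    rw [← hlaw] at h
    exact h.comp_measurable hmN
  have hN₀ : μ {ω | N ω ≠ 0} ≠ 0 := by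
    have hone : 0 < μ {ω | N ω = 1} := by
      rw [hpois 1, ENNReal.ofReal_pos]
      positivity
    exact (hone.trans_le (measure_mono fun ω (h : N ω = 1) => by simp [h])).ne'
  exact integrable_abs_rpow_iff_integrable_rnorm_rpow hp hm hmeas hmN hid hind hmom hN₀

/-- For iid `(ζ k) ~ H` and an independent `N ~ Poisson(C₂)` with `0 < C₂ < ∞`,
and any `m > 0`, `1 ≤ p ≤ ∞`: `E|ζ₁|^m < ∞` iff `E ‖(ζ₁,…,ζ_N)‖_p^m < ∞`. -/
theorem stmt11 {Ω : Type*} [MeasurableSpace Ω] (μ : Measure Ω) [IsProbabilityMeasure μ]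
    (ζ : ℕ → Ω → ℝ) (N : Ω → ℕ) (C₂ : ℝ) (hC : 0 < C₂)
    (m : ℝ) (hm : 0 < m) (p : ℝ≥0∞) (hp : 1 ≤ p)
    (hmeas : ∀ k, Measurable (ζ k)) (hmN : Measurable N)
    (hid : ∀ k, Measure.map (ζ k) μ = Measure.map (ζ 0) μ)
    (hpois : ∀ k, μ {ω | N ω = k} =
      ENNReal.ofReal (Real.exp (-C₂) * C₂ ^ k / k.factorial))
    (hindep : iIndepFun
      (fun i : Option ℕ => Option.elim i (fun ω => (N ω : ℝ)) ζ) μ) :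
    Integrable (fun ω => |ζ 0 ω| ^ m) μ ↔
      Integrable (fun ω => (rnorm p (N ω) (fun k => ζ k ω)) ^ m) μ :=
  stmt11_general μ ζ N C₂ hC m hm p hp hmeas hmN hid hpois hindep
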